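/- arXiv:2110.04368 — 7 statements merged into one kernel-verified Lean document; each statement's English description precedes it below -/
import Mathlib

section
/- Let u : ℝ → ℝ be differentiable with derivative u' satisfying u' x > 0 for all x and u' strictly antitone (u strictly concave). Let π^P and π^A be probability vectors on Fin S with all entries positive, let λ > 0, and let w : Fin S → ℝ satisfy the first-best first-order condition π^P s = λ * π^A s * u' (w s) for every s. If π^P MLRP-dominates π^A, then w is monotone decreasing in s (s ≤ s' implies w s' ≤ w s). -/
theorem StrictAnti.antitone_of_monotone_comp {α β γ : Type*} [Preorder α] [LinearOrder β]
    [Preorder γ] {f : β → γ} {g : α → β} (hf : StrictAnti f) (hfg : Monotone (f ∘ g)) :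
    Antitone g :=
  fun _ _ hab => hf.le_iff_ge.mp (hfg hab)

theorem Monotone.of_const_mul {α M₀ : Type*} [Preorder α] [Mul M₀] [Zero M₀] [Preorder M₀]
    [PosMulReflectLE M₀] {c : M₀} {f : α → M₀} (hc : 0 < c)
    (h : Monotone fun a => c * f a) : Monotone f :=
  fun _ _ hab => le_of_mul_le_mul_left (h hab) hc

theorem stmt_2_general {S : ℕ} (u' : ℝ → ℝ)
    (hanti : StrictAnti u')
    (πP πA : Fin S → ℝ)
    (hApos : ∀ s, 0 < πA s)
    (lam : ℝ) (hlam : 0 < lam) (w : Fin S → ℝ)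
    (hFOC : ∀ s, πP s = lam * πA s * u' (w s))
    (hMLRP : Monotone fun s => πP s / πA s) :
    ∀ s s' : Fin S, s ≤ s' → w s' ≤ w s := by
  have hratio : (fun s => πP s / πA s) = fun s => lam * u' (w s) := by
    funext s
    rw [hFOC s, mul_right_comm, mul_div_cancel_right₀ _ (hApos s).ne']
  rw [hratio] at hMLRP
  exact hanti.antitone_of_monotone_comp (hMLRP.of_const_mul hlam)

theorem stmt_2 {S : ℕ} (u u' : ℝ → ℝ)
    (hderiv : ∀ x, HasDerivAt u (u' x) x)
    (hpos : ∀ x, 0 < u' x) (hanti : StrictAnti u')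
    (πP πA : Fin S → ℝ)
    (hPpos : ∀ s, 0 < πP s) (hPsum : ∑ s, πP s = 1)
    (hApos : ∀ s, 0 < πA s) (hAsum : ∑ s, πA s = 1)
    (lam : ℝ) (hlam : 0 < lam) (w : Fin S → ℝ)
    (hFOC : ∀ s, πP s = lam * πA s * u' (w s))
    (hMLRP : Monotone fun s => πP s / πA s) :
    ∀ s s' : Fin S, s ≤ s' → w s' ≤ w s :=
  stmt_2_general u' hanti πP πA hApos lam hlam w hFOC hMLRP
end

section
/- Let u : ℝ → ℝ be differentiable with derivative u' satisfying u' x > 0 for all x and u' strictly antitone (u strictly concave). Let π^P and π^A be probability vectors on Fin S with all entries positive, let λ > 0, and let w : Fin S → ℝ satisfy the first-best first-order condition π^P s = λ * π^A s * u' (w s) for every s. If π^A MLRP-dominates π^P, then w is monotone increasing in s (s ≤ s' implies w s ≤ w s'). -/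
/-! The first-order condition says that marginal utility `lam * u' (w s)` equals the inverse
likelihood ratio `πP s / πA s`. Under MLRP that ratio falls with output, so marginal utility
falls too, and since `u'` is strictly decreasing the wage must rise. -/

lemma Monotone.inv_antitone_of_pos {α 𝕜 : Type*} [Preorder α] [Field 𝕜] [LinearOrder 𝕜]
    [IsStrictOrderedRing 𝕜] {f : α → 𝕜} (hf : Monotone f) (hpos : ∀ a, 0 < f a) :
    Antitone fun a => (f a)⁻¹ :=
  fun _ _ hab => inv_anti₀ (hpos _) (hf hab)

lemma StrictAnti.monotone_of_antitone_comp {α β γ : Type*} [Preorder α] [LinearOrder β]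
    [Preorder γ] {g : β → γ} {w : α → β} (hg : StrictAnti g) (hgw : Antitone (g ∘ w)) :
    Monotone w :=
  fun _ _ hab => hg.le_iff_ge.mp (hgw hab)

lemma mul_eq_inv_div_of_eq_mul_mul {𝕜 : Type*} [Field 𝕜] {p a lam m : 𝕜} (ha : a ≠ 0)
    (h : p = lam * a * m) : lam * m = (a / p)⁻¹ := by
  rw [inv_div, h, mul_right_comm, mul_div_cancel_right₀ _ ha]

theorem stmt_3_general {S : ℕ} (u' : ℝ → ℝ)
    (hanti : StrictAnti u')
    (πP πA : Fin S → ℝ)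
    (hPpos : ∀ s, 0 < πP s)
    (hApos : ∀ s, 0 < πA s)
    (lam : ℝ) (hlam : 0 < lam) (w : Fin S → ℝ)
    (hFOC : ∀ s, πP s = lam * πA s * u' (w s))
    (hMLRP : Monotone fun s => πA s / πP s) :
    ∀ s s' : Fin S, s ≤ s' → w s ≤ w s' := by
  have hmarginal : Antitone fun s => lam * u' (w s) := by
    simpa only [mul_eq_inv_div_of_eq_mul_mul (hApos _).ne' (hFOC _)] using
      hMLRP.inv_antitone_of_pos fun s => div_pos (hApos s) (hPpos s)
  exact (hanti.const_mul hlam).monotone_of_antitone_comp hmarginal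

theorem stmt_3 {S : ℕ} (u u' : ℝ → ℝ)
    (hderiv : ∀ x, HasDerivAt u (u' x) x)
    (hpos : ∀ x, 0 < u' x) (hanti : StrictAnti u')
    (πP πA : Fin S → ℝ)
    (hPpos : ∀ s, 0 < πP s) (hPsum : ∑ s, πP s = 1)
    (hApos : ∀ s, 0 < πA s) (hAsum : ∑ s, πA s = 1)
    (lam : ℝ) (hlam : 0 < lam) (w : Fin S → ℝ)
    (hFOC : ∀ s, πP s = lam * πA s * u' (w s))
    (hMLRP : Monotone fun s => πA s / πP s) :
    ∀ s s' : Fin S, s ≤ s' → w s ≤ w s' :=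
  stmt_3_general u' hanti πP πA hPpos hApos lam hlam w hFOC hMLRP
end

section
/- Let the agent have CARA utility u x = -Real.exp (-x), let π^A and π^P be probability vectors on Fin S with all entries positive, and suppose ū + c < 0. Define w* : Fin S → ℝ by w* s = -Real.log (-(π^P s / π^A s) * (ū + c)). Then w* satisfies the individual rationality constraint with equality, ∑ s, π^A s * (-Real.exp (-(w* s))) = ū + c, and w* is the unique minimizer of ∑ s, π^P s * w s over all w : Fin S → ℝ satisfying ∑ s, π^A s * (-Real.exp (-(w s))) ≥ ū + c. -/
/-! The first-order condition `πA s · exp (-w* s) = λ · πP s`, with multiplier `λ = -(ū + c)`,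
pins down `w*`. For any other wage `w`, convexity of `exp` (in the form `exp t ≥ 1 + t`,
strict for `t ≠ 0`) gives `πA s · exp (-w s) ≥ λ · πP s · (w* s - w s + 1)` termwise; summing and
using the IR constraint `∑ πA s · exp (-w s) ≤ λ` yields `∑ πP w* ≤ ∑ πP w`, strictly unless
`w = w*`. -/

open Finset Real

lemma exp_neg_mul_sub_add_one_le (x y : ℝ) : exp (-x) * (x - y + 1) ≤ exp (-y) := by
  calc exp (-x) * (x - y + 1) ≤ exp (-x) * exp (x - y) := by
        gcongr
        linarith [add_one_le_exp (x - y)]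
    _ = exp (-y) := by rw [← exp_add]; ring_nf

lemma exp_neg_mul_sub_add_one_lt {x y : ℝ} (h : x ≠ y) : exp (-x) * (x - y + 1) < exp (-y) := by
  calc exp (-x) * (x - y + 1) < exp (-x) * exp (x - y) := by
        gcongr
        linarith [add_one_lt_exp (sub_ne_zero.mpr h)]
    _ = exp (-y) := by rw [← exp_add]; ring_nf

lemma mul_sub_add_one_le_mul_exp_neg {a b x₀ x : ℝ} (ha : 0 ≤ a) (h₀ : a * exp (-x₀) = b) :
    b * (x₀ - x + 1) ≤ a * exp (-x) := by
  rw [← h₀, mul_assoc]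
  exact mul_le_mul_of_nonneg_left (exp_neg_mul_sub_add_one_le _ _) ha

lemma mul_sub_add_one_lt_mul_exp_neg {a b x₀ x : ℝ} (ha : 0 < a) (h₀ : a * exp (-x₀) = b)
    (hx : x₀ ≠ x) : b * (x₀ - x + 1) < a * exp (-x) := by
  rw [← h₀, mul_assoc]
  exact mul_lt_mul_of_pos_left (exp_neg_mul_sub_add_one_lt hx) ha

section ExpBudget

variable {ι : Type*} [Fintype ι] {a p w₀ w : ι → ℝ} {B : ℝ}

lemma sum_mul_sub_add_one (hp : ∑ i, p i = 1) :
    ∑ i, B * p i * (w₀ i - w i + 1) = B * (∑ i, p i * w₀ i - ∑ i, p i * w i + 1) := by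
  simp only [mul_assoc, mul_add, mul_sub, mul_one, sum_add_distrib, sum_sub_distrib, ← mul_sum, hp]

lemma sum_mul_le_of_sum_mul_exp_neg_le (hB : 0 < B) (hp : ∑ i, p i = 1) (ha : ∀ i, 0 ≤ a i)
    (h₀ : ∀ i, a i * exp (-w₀ i) = B * p i) (hw : ∑ i, a i * exp (-w i) ≤ B) :
    ∑ i, p i * w₀ i ≤ ∑ i, p i * w i := by
  have := (sum_le_sum fun i _ => mul_sub_add_one_le_mul_exp_neg (ha i) (h₀ i)).trans hw
  rw [sum_mul_sub_add_one hp] at this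
  nlinarith

lemma sum_mul_lt_of_sum_mul_exp_neg_le (hB : 0 < B) (hp : ∑ i, p i = 1) (ha : ∀ i, 0 < a i)
    (h₀ : ∀ i, a i * exp (-w₀ i) = B * p i) (hw : ∑ i, a i * exp (-w i) ≤ B) (hne : w ≠ w₀) :
    ∑ i, p i * w₀ i < ∑ i, p i * w i := by
  obtain ⟨j, hj⟩ := Function.ne_iff.mp hne
  have := (sum_lt_sum (fun i _ => mul_sub_add_one_le_mul_exp_neg (ha i).le (h₀ i))
    ⟨j, mem_univ j, mul_sub_add_one_lt_mul_exp_neg (ha j) (h₀ j) (Ne.symm hj)⟩).trans_le hw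
  rw [sum_mul_sub_add_one hp] at this
  nlinarith

end ExpBudget

lemma mul_exp_neg_neg_log {a p u : ℝ} (ha : 0 < a) (hp : 0 < p) (hu : u < 0) :
    a * exp (-(-log (-(p / a) * u))) = -u * p := by
  have : 0 < -(p / a) * u := by
    have := div_pos hp ha
    nlinarith
  rw [neg_neg, exp_log this]
  field_simp

theorem stmt_5_general {S : ℕ} (πA πP : Fin S → ℝ)
    (hApos : ∀ s, 0 < πA s)
    (hPpos : ∀ s, 0 < πP s) (hPsum : ∑ s, πP s = 1)
    (ubar c : ℝ) (hneg : ubar + c < 0)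
    (wstar : Fin S → ℝ)
    (hwstar : ∀ s, wstar s = -Real.log (-(πP s / πA s) * (ubar + c))) :
    ∑ s, πA s * (-Real.exp (-(wstar s))) = ubar + c ∧
    (∀ w : Fin S → ℝ, ∑ s, πA s * (-Real.exp (-(w s))) ≥ ubar + c →
      ∑ s, πP s * wstar s ≤ ∑ s, πP s * w s) ∧
    (∀ w : Fin S → ℝ, ∑ s, πA s * (-Real.exp (-(w s))) ≥ ubar + c →
      ∑ s, πP s * w s = ∑ s, πP s * wstar s → w = wstar) := by
  have hB : 0 < -(ubar + c) := neg_pos.mpr hneg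
  have hstar : ∀ s, πA s * exp (-wstar s) = -(ubar + c) * πP s := fun s => by
    rw [hwstar s]
    exact mul_exp_neg_neg_log (hApos s) (hPpos s) hneg
  have hsum_neg : ∀ w : Fin S → ℝ,
      ∑ s, πA s * (-exp (-w s)) = -∑ s, πA s * exp (-w s) := fun w => by
    simp only [mul_neg, sum_neg_distrib]
  have hbudget : ∀ w : Fin S → ℝ, ∑ s, πA s * (-exp (-w s)) ≥ ubar + c →
      ∑ s, πA s * exp (-w s) ≤ -(ubar + c) := fun w hw => by
    linarith [hsum_neg w]
  refine ⟨?_, fun w hw => ?_, fun w hw heq => ?_⟩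
  · rw [hsum_neg, sum_congr rfl fun s _ => hstar s, ← mul_sum, hPsum]
    ring
  · exact sum_mul_le_of_sum_mul_exp_neg_le hB hPsum (fun s => (hApos s).le) hstar (hbudget w hw)
  · by_contra hne
    exact (sum_mul_lt_of_sum_mul_exp_neg_le hB hPsum hApos hstar (hbudget w hw) hne).ne' heq

theorem stmt_5 {S : ℕ} (πA πP : Fin S → ℝ)
    (hApos : ∀ s, 0 < πA s) (hAsum : ∑ s, πA s = 1)
    (hPpos : ∀ s, 0 < πP s) (hPsum : ∑ s, πP s = 1)
    (ubar c : ℝ) (hneg : ubar + c < 0)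
    (wstar : Fin S → ℝ)
    (hwstar : ∀ s, wstar s = -Real.log (-(πP s / πA s) * (ubar + c))) :
    ∑ s, πA s * (-Real.exp (-(wstar s))) = ubar + c ∧
    (∀ w : Fin S → ℝ, ∑ s, πA s * (-Real.exp (-(w s))) ≥ ubar + c →
      ∑ s, πP s * wstar s ≤ ∑ s, πP s * w s) ∧
    (∀ w : Fin S → ℝ, ∑ s, πA s * (-Real.exp (-(w s))) ≥ ubar + c →
      ∑ s, πP s * w s = ∑ s, πP s * wstar s → w = wstar) :=
  stmt_5_general πA πP hApos hPpos hPsum ubar c hneg wstar hwstar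
end

section
/- Let the agent have CARA utility u x = -Real.exp (-x) and let the state space be Fin 3, with π^A and π^P probability vectors with all entries positive and ū + c < 0. Let π̃^P be obtained from π^P by an ε-reallocation between states 2 and 3: π̃^P 1 = π^P 1, π̃^P 2 = π^P 2 + ε, π̃^P 3 = π^P 3 - ε, where 0 < ε < π^P 3. If w* is the minimizer of ∑ s, π^P s * w s subject to ∑ s, π^A s * (-Real.exp (-(w s))) ≥ ū + c, and w̃* is the minimizer of the same problem with π̃^P in place of π^P, then w̃* 2 < w* 2, w̃* 3 > w* 3, and w̃* 1 = w* 1. -/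
/-!
With `d s = w₀ s - w s`, where `w₀` is the closed-form wage and `u = ū + c`, the CARA constraint term factors as
`πA s * exp (-w s) = -(πP s * u) * exp (d s)`, so feasibility of `w` reads `∑ πP s * exp (d s) ≤ 1`,
while minimality of `w` against the feasible `w₀` reads `0 ≤ ∑ πP s * d s`. Hence
`∑ πP s * (exp (d s) - 1 - d s) ≤ 0`; every summand is nonnegative and vanishes only at `d s = 0`,
so every minimizer is `w₀`. The comparative statics are then read off the closed form, which is
strictly decreasing in the principal's belief `πP s` and does not depend on the other states.
-/

open Finset Real

noncomputable def firstBestWage {ι : Type*} (πA πP : ι → ℝ) (u : ℝ) (s : ι) : ℝ :=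
  -log (-(πP s / πA s * u))

section FirstBest

variable {ι : Type*} {πA πP : ι → ℝ} {u : ℝ}

lemma mul_exp_neg_eq_mul_exp_sub_firstBestWage {s : ι} (hA : 0 < πA s) (hP : 0 < πP s)
    (hu : u < 0) (x : ℝ) :
    πA s * exp (-x) = -(πP s * u) * exp (firstBestWage πA πP u s - x) := by
  have hpos : 0 < -(πP s / πA s * u) := by
    have := div_pos hP hA; nlinarith
  rw [firstBestWage, sub_eq_add_neg, exp_add, exp_neg (log _), exp_log hpos]
  field_simp [hu.ne]

lemma firstBestWage_lt_of_lt {πP' : ι → ℝ} {s : ι} (hA : 0 < πA s) (hP : 0 < πP s)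
    (hu : u < 0) (h : πP s < πP' s) :
    firstBestWage πA πP' u s < firstBestWage πA πP u s := by
  have hdiv := div_lt_div_of_pos_right h hA
  have hpos := div_pos hP hA
  exact neg_lt_neg (log_lt_log (by nlinarith) (by nlinarith))

variable [Fintype ι]

lemma sum_mul_exp_neg_eq (hA : ∀ s, 0 < πA s) (hP : ∀ s, 0 < πP s) (hu : u < 0)
    (w : ι → ℝ) :
    ∑ s, πA s * exp (-w s) = -u * ∑ s, πP s * exp (firstBestWage πA πP u s - w s) := by
  rw [mul_sum]
  refine sum_congr rfl fun s _ => ?_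
  rw [mul_exp_neg_eq_mul_exp_sub_firstBestWage (hA s) (hP s) hu]
  ring

lemma firstBestWage_feasible (hA : ∀ s, 0 < πA s) (hP : ∀ s, 0 < πP s)
    (hPsum : ∑ s, πP s = 1) (hu : u < 0) :
    ∑ s, πA s * (-exp (-firstBestWage πA πP u s)) ≥ u := by
  simp only [mul_neg, sum_neg_distrib, sum_mul_exp_neg_eq hA hP hu, sub_self, exp_zero,
    mul_one, hPsum]
  linarith

lemma eq_firstBestWage_of_minimizer (hA : ∀ s, 0 < πA s) (hP : ∀ s, 0 < πP s)
    (hPsum : ∑ s, πP s = 1) (hu : u < 0) {w : ι → ℝ}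
    (hfeas : ∑ s, πA s * (-exp (-w s)) ≥ u)
    (hmin : ∀ v : ι → ℝ, ∑ s, πA s * (-exp (-v s)) ≥ u →
      ∑ s, πP s * w s ≤ ∑ s, πP s * v s) :
    w = firstBestWage πA πP u := by
  set d : ι → ℝ := fun s => firstBestWage πA πP u s - w s
  have hexp_le : ∑ s, πP s * exp (d s) ≤ 1 := by
    simp only [mul_neg, sum_neg_distrib, sum_mul_exp_neg_eq hA hP hu] at hfeas
    nlinarith
  have hd_nonneg : 0 ≤ ∑ s, πP s * d s := by
    have := hmin _ (firstBestWage_feasible hA hP hPsum hu)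
    simp only [d, mul_sub, sum_sub_distrib]
    linarith
  have hgap_nonneg : ∀ s ∈ univ, 0 ≤ πP s * (exp (d s) - 1 - d s) := fun s _ =>
    mul_nonneg (hP s).le (by linarith [add_one_le_exp (d s)])
  have hgap_sum : ∑ s, πP s * (exp (d s) - 1 - d s) = 0 := by
    refine le_antisymm ?_ (sum_nonneg hgap_nonneg)
    simp only [mul_sub, mul_one, sum_sub_distrib, hPsum]
    linarith
  funext s
  have hgap : exp (d s) = d s + 1 := by
    have := (sum_eq_zero_iff_of_nonneg hgap_nonneg).1 hgap_sum s (mem_univ s)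
    have := (mul_eq_zero.1 this).resolve_left (hP s).ne'
    linarith
  by_contra hne
  exact (add_one_lt_exp (sub_ne_zero.2 (Ne.symm hne))).ne' hgap

end FirstBest

-- States 1, 2, 3 of the paper are the indices 0, 1, 2 of `Fin 3`.
theorem stmt_6_general (πA πP : Fin 3 → ℝ)
    (hApos : ∀ s, 0 < πA s)
    (hPpos : ∀ s, 0 < πP s) (hPsum : ∑ s, πP s = 1)
    (ubar c : ℝ) (hneg : ubar + c < 0)
    (ε : ℝ) (hε0 : 0 < ε) (hεtop : ε < πP 2)
    (πtP : Fin 3 → ℝ) (hπt : πtP = ![πP 0, πP 1 + ε, πP 2 - ε])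
    (wstar wtstar : Fin 3 → ℝ)
    (hwfeas : ∑ s, πA s * (-Real.exp (-(wstar s))) ≥ ubar + c)
    (hwmin : ∀ w : Fin 3 → ℝ, ∑ s, πA s * (-Real.exp (-(w s))) ≥ ubar + c →
      ∑ s, πP s * wstar s ≤ ∑ s, πP s * w s)
    (hwtfeas : ∑ s, πA s * (-Real.exp (-(wtstar s))) ≥ ubar + c)
    (hwtmin : ∀ w : Fin 3 → ℝ, ∑ s, πA s * (-Real.exp (-(w s))) ≥ ubar + c →
      ∑ s, πtP s * wtstar s ≤ ∑ s, πtP s * w s) :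
    wtstar 1 < wstar 1 ∧ wstar 2 < wtstar 2 ∧ wtstar 0 = wstar 0 := by
  subst hπt
  have htpos : ∀ s, 0 < ![πP 0, πP 1 + ε, πP 2 - ε] s := by
    intro s
    fin_cases s <;> simp <;> linarith [hPpos 0, hPpos 1]
  have htsum : ∑ s, ![πP 0, πP 1 + ε, πP 2 - ε] s = 1 := by
    rw [Fin.sum_univ_three] at hPsum ⊢
    simp only [Matrix.cons_val]
    linarith
  obtain rfl := eq_firstBestWage_of_minimizer hApos hPpos hPsum hneg hwfeas hwmin
  obtain rfl := eq_firstBestWage_of_minimizer hApos htpos htsum hneg hwtfeas hwtmin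
  refine ⟨firstBestWage_lt_of_lt (hApos 1) (hPpos 1) hneg (by simpa using hε0),
    firstBestWage_lt_of_lt (hApos 2) (htpos 2) hneg (by simpa using hε0), ?_⟩
  simp [firstBestWage]

theorem stmt_6 (πA πP : Fin 3 → ℝ)
    (hApos : ∀ s, 0 < πA s) (hAsum : ∑ s, πA s = 1)
    (hPpos : ∀ s, 0 < πP s) (hPsum : ∑ s, πP s = 1)
    (ubar c : ℝ) (hneg : ubar + c < 0)
    (ε : ℝ) (hε0 : 0 < ε) (hεtop : ε < πP 2)
    (πtP : Fin 3 → ℝ) (hπt : πtP = ![πP 0, πP 1 + ε, πP 2 - ε])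
    (wstar wtstar : Fin 3 → ℝ)
    (hwfeas : ∑ s, πA s * (-Real.exp (-(wstar s))) ≥ ubar + c)
    (hwmin : ∀ w : Fin 3 → ℝ, ∑ s, πA s * (-Real.exp (-(w s))) ≥ ubar + c →
      ∑ s, πP s * wstar s ≤ ∑ s, πP s * w s)
    (hwtfeas : ∑ s, πA s * (-Real.exp (-(wtstar s))) ≥ ubar + c)
    (hwtmin : ∀ w : Fin 3 → ℝ, ∑ s, πA s * (-Real.exp (-(w s))) ≥ ubar + c →
      ∑ s, πtP s * wtstar s ≤ ∑ s, πtP s * w s) :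
    wtstar 1 < wstar 1 ∧ wstar 2 < wtstar 2 ∧ wtstar 0 = wstar 0 :=
  stmt_6_general πA πP hApos hPpos hPsum ubar c hneg ε hε0 hεtop πtP hπt wstar wtstar hwfeas hwmin
    hwtfeas hwtmin
end

section
/- Let h : ℝ → ℝ be strictly increasing, let δ and π be probability vectors on Fin S with all entries positive, let η be a probability vector on Fin S, and let ū, c, c' ∈ ℝ. If v : Fin S → ℝ minimizes ∑ s, δ s * h (v s) over the set {v : ∑ s, π s * v s ≥ ū + c ∧ ∑ s, (π s - η s) * v s ≥ c'}, then the individual rationality constraint binds: ∑ s, π s * v s = ū + c. -/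
/-!
If the individual rationality constraint were slack by `ε > 0`, lowering every promised utility
by `ε` would keep it satisfied, would leave the incentive constraint unchanged (its weights
`π - η` sum to zero), and would strictly lower the wage bill because `h` is strictly increasing.
-/

open Finset

section ConstantShift

variable {ι : Type*} [Fintype ι]

theorem sum_mul_sub_const (w v : ι → ℝ) (a : ℝ) :
    ∑ s, w s * (v s - a) = ∑ s, w s * v s - (∑ s, w s) * a := by
  simp only [mul_sub, sum_sub_distrib, sum_mul]

theorem sum_mul_sub_const_of_sum_eq_one {π : ι → ℝ} (hπsum : ∑ s, π s = 1) (v : ι → ℝ) (a : ℝ) :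
    ∑ s, π s * (v s - a) = ∑ s, π s * v s - a := by
  rw [sum_mul_sub_const, hπsum, one_mul]

theorem sum_sub_mul_sub_const_of_sum_eq {π η : ι → ℝ} (hsum : ∑ s, π s = ∑ s, η s)
    (v : ι → ℝ) (a : ℝ) :
    ∑ s, (π s - η s) * (v s - a) = ∑ s, (π s - η s) * v s := by
  rw [sum_mul_sub_const, sum_sub_distrib, hsum, sub_self, zero_mul, sub_zero]

theorem sum_mul_comp_lt_of_strictMono [Nonempty ι] {h : ℝ → ℝ} (hmono : StrictMono h)
    {δ : ι → ℝ} (hδpos : ∀ s, 0 < δ s) {v w : ι → ℝ} (hvw : ∀ s, v s < w s) :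
    ∑ s, δ s * h (v s) < ∑ s, δ s * h (w s) :=
  sum_lt_sum_of_nonempty univ_nonempty fun s _ =>
    mul_lt_mul_of_pos_left (hmono (hvw s)) (hδpos s)

end ConstantShift

theorem stmt_7_general {S : ℕ} (h : ℝ → ℝ) (hmono : StrictMono h)
    (δ π η : Fin S → ℝ)
    (hδpos : ∀ s, 0 < δ s)
    (hπsum : ∑ s, π s = 1)
    (hηsum : ∑ s, η s = 1)
    (ubar c c' : ℝ) (v : Fin S → ℝ)
    (hIR : ∑ s, π s * v s ≥ ubar + c)
    (hIC : ∑ s, (π s - η s) * v s ≥ c')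
    (hmin : ∀ v' : Fin S → ℝ,
      (∑ s, π s * v' s ≥ ubar + c ∧ ∑ s, (π s - η s) * v' s ≥ c') →
      ∑ s, δ s * h (v s) ≤ ∑ s, δ s * h (v' s)) :
    ∑ s, π s * v s = ubar + c := by
  refine le_antisymm (not_lt.mp fun hslack => ?_) hIR
  have : Nonempty (Fin S) := by
    obtain ⟨s, -, -⟩ := exists_ne_zero_of_sum_ne_zero (hπsum.symm ▸ one_ne_zero)
    exact ⟨s⟩
  set ε := ∑ s, π s * v s - (ubar + c)
  have hIR' : ∑ s, π s * (v s - ε) ≥ ubar + c := by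
    rw [sum_mul_sub_const_of_sum_eq_one hπsum]; linarith
  have hIC' : ∑ s, (π s - η s) * (v s - ε) ≥ c' := by
    rwa [sum_sub_mul_sub_const_of_sum_eq (hπsum.trans hηsum.symm)]
  have hcheaper := sum_mul_comp_lt_of_strictMono hmono hδpos (v := fun s => v s - ε) (w := v)
    fun s => sub_lt_self _ (sub_pos.mpr hslack)
  exact (hmin _ ⟨hIR', hIC'⟩).not_gt hcheaper

theorem stmt_7 {S : ℕ} (h : ℝ → ℝ) (hmono : StrictMono h)
    (δ π η : Fin S → ℝ)
    (hδpos : ∀ s, 0 < δ s) (hδsum : ∑ s, δ s = 1)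
    (hπpos : ∀ s, 0 < π s) (hπsum : ∑ s, π s = 1)
    (hηnn : ∀ s, 0 ≤ η s) (hηsum : ∑ s, η s = 1)
    (ubar c c' : ℝ) (v : Fin S → ℝ)
    (hIR : ∑ s, π s * v s ≥ ubar + c)
    (hIC : ∑ s, (π s - η s) * v s ≥ c')
    (hmin : ∀ v' : Fin S → ℝ,
      (∑ s, π s * v' s ≥ ubar + c ∧ ∑ s, (π s - η s) * v' s ≥ c') →
      ∑ s, δ s * h (v s) ≤ ∑ s, δ s * h (v' s)) :
    ∑ s, π s * v s = ubar + c :=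
  stmt_7_general h hmono δ π η hδpos hπsum hηsum ubar c c' v hIR hIC hmin
end

section
/- Let u : ℝ → ℝ be differentiable with derivative u' satisfying u' x > 0 for all x and u' strictly antitone (u strictly concave). Let π^P(H), π^A(H), and π^A(L) be probability vectors on Fin S with π^P(H) having all entries positive, let λ > 0 and μ ≥ 0, and let w : Fin S → ℝ satisfy the second-best first-order condition 1 = (λ * (π^A(H) s / π^P(H) s) + μ * ((π^A(H) s - π^A(L) s) / π^P(H) s)) * u' (w s) for every s. If both likelihood ratios s ↦ π^A(H) s / π^P(H) s and s ↦ (π^A(H) s - π^A(L) s) / π^P(H) s are monotone increasing in s, then w is monotone increasing in s. -/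
/- The first-order condition says `u' (w s)` is the reciprocal of the weight that the
multipliers put on the two likelihood ratios. With `lam, mu ≥ 0` that weight increases with
`s`, so `u' ∘ w` decreases, and since `u'` is strictly decreasing `w` must increase. -/

theorem Monotone.of_mul_strictAnti_comp_eq_one {ι α : Type*} [Preorder ι] [LinearOrder α]
    {c : ι → ℝ} {g : α → ℝ} {w : ι → α} (hg : ∀ x, 0 < g x) (hanti : StrictAnti g)
    (hc : Monotone c) (h : ∀ s, c s * g (w s) = 1) : Monotone w := by
  intro s t hst
  have hinv : ∀ s, c s = (g (w s))⁻¹ := fun s => eq_inv_of_mul_eq_one_left (h s)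
  have hle : (g (w s))⁻¹ ≤ (g (w t))⁻¹ := by simpa only [hinv] using hc hst
  exact hanti.le_iff_ge.mp ((inv_le_inv₀ (hg _) (hg _)).mp hle)

theorem stmt_9_general {S : ℕ} (u' : ℝ → ℝ)
    (hpos : ∀ x, 0 < u' x) (hanti : StrictAnti u')
    (πPH πAH πAL : Fin S → ℝ)
    (lam mu : ℝ) (hlam : 0 < lam) (hmu : 0 ≤ mu)
    (w : Fin S → ℝ)
    (hFOC : ∀ s, 1 =
      (lam * (πAH s / πPH s) + mu * ((πAH s - πAL s) / πPH s)) * u' (w s))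
    (hLR1 : Monotone fun s => πAH s / πPH s)
    (hLR2 : Monotone fun s => (πAH s - πAL s) / πPH s) :
    Monotone w :=
  Monotone.of_mul_strictAnti_comp_eq_one hpos hanti
    ((hLR1.const_mul hlam.le).add (hLR2.const_mul hmu)) fun s => (hFOC s).symm

theorem stmt_9 {S : ℕ} (u u' : ℝ → ℝ)
    (hderiv : ∀ x, HasDerivAt u (u' x) x)
    (hpos : ∀ x, 0 < u' x) (hanti : StrictAnti u')
    (πPH πAH πAL : Fin S → ℝ)
    (hPpos : ∀ s, 0 < πPH s) (hPsum : ∑ s, πPH s = 1)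
    (hAHnn : ∀ s, 0 ≤ πAH s) (hAHsum : ∑ s, πAH s = 1)
    (hALnn : ∀ s, 0 ≤ πAL s) (hALsum : ∑ s, πAL s = 1)
    (lam mu : ℝ) (hlam : 0 < lam) (hmu : 0 ≤ mu)
    (w : Fin S → ℝ)
    (hFOC : ∀ s, 1 =
      (lam * (πAH s / πPH s) + mu * ((πAH s - πAL s) / πPH s)) * u' (w s))
    (hLR1 : Monotone fun s => πAH s / πPH s)
    (hLR2 : Monotone fun s => (πAH s - πAL s) / πPH s) :
    Monotone w :=
  stmt_9_general u' hpos hanti πPH πAH πAL lam mu hlam hmu w hFOC hLR1 hLR2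
end

section
/- Let π and η be probability vectors on Fin S (S ≥ 2) with all entries positive, suppose π MLRP-dominates η, and suppose π ≠ η. Then π 0 < η 0 (the likelihood ratio at the lowest state is strictly below 1) and π (S-1) > η (S-1) (the likelihood ratio at the highest state is strictly above 1). -/
/-! A monotone likelihood ratio `π / η` which is `≥ 1` at the lowest state is `≥ 1` everywhere,
so `η ≤ π` pointwise; equal total masses then force `π = η`. Symmetrically at the highest state. -/

theorem eq_of_le_of_sum_eq {ι : Type*} [Fintype ι] {u v : ι → ℝ} (hle : u ≤ v)
    (hsum : ∑ i, u i = ∑ i, v i) : u = v :=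
  by_contra fun hne => (Fintype.sum_strictMono (lt_of_le_of_ne hle hne)).ne hsum

section LikelihoodRatio

variable {ι : Type*} [Preorder ι] {f g : ι → ℝ}

theorem le_apply_of_monotone_div (hg : ∀ i, 0 < g i) (hmono : Monotone fun i => f i / g i)
    {a b : ι} (hab : a ≤ b) (ha : g a ≤ f a) : g b ≤ f b := by
  have hratio_a : 1 ≤ f a / g a := (one_le_div (hg a)).2 ha
  exact (one_le_div (hg b)).1 (hratio_a.trans (hmono hab))

theorem apply_le_of_monotone_div (hg : ∀ i, 0 < g i) (hmono : Monotone fun i => f i / g i)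
    {a b : ι} (hab : a ≤ b) (hb : f b ≤ g b) : f a ≤ g a := by
  have hratio_b : f b / g b ≤ 1 := (div_le_one (hg b)).2 hb
  exact (div_le_one (hg a)).1 ((hmono hab).trans hratio_b)

variable [Fintype ι]

theorem lt_apply_of_monotone_div_of_isBot (hg : ∀ i, 0 < g i)
    (hmono : Monotone fun i => f i / g i) (hsum : ∑ i, f i = ∑ i, g i) (hne : f ≠ g)
    {a : ι} (ha : IsBot a) : f a < g a :=
  lt_of_not_ge fun hga =>
    hne (eq_of_le_of_sum_eq (fun i => le_apply_of_monotone_div hg hmono (ha i) hga) hsum.symm).symm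

theorem apply_lt_of_monotone_div_of_isTop (hg : ∀ i, 0 < g i)
    (hmono : Monotone fun i => f i / g i) (hsum : ∑ i, f i = ∑ i, g i) (hne : f ≠ g)
    {a : ι} (ha : IsTop a) : g a < f a :=
  lt_of_not_ge fun hfa =>
    hne (eq_of_le_of_sum_eq (fun i => apply_le_of_monotone_div hg hmono (ha i) hfa) hsum)

end LikelihoodRatio

theorem stmt_10 {S : ℕ} (hS : 2 ≤ S) (π η : Fin S → ℝ)
    (hπsum : ∑ s, π s = 1)
    (hηpos : ∀ s, 0 < η s) (hηsum : ∑ s, η s = 1)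
    (hMLRP : Monotone fun s => π s / η s) (hne : π ≠ η) :
    π ⟨0, by omega⟩ < η ⟨0, by omega⟩ ∧
      η ⟨S - 1, by omega⟩ < π ⟨S - 1, by omega⟩ := by
  have hsum : ∑ s, π s = ∑ s, η s := hπsum.trans hηsum.symm
  have hbot : IsBot (⟨0, by omega⟩ : Fin S) := fun _ => Fin.mk_le_of_le_val (Nat.zero_le _)
  have htop : IsTop (⟨S - 1, by omega⟩ : Fin S) := fun s =>
    Fin.le_def.mpr (Nat.le_sub_one_of_lt s.isLt)
  exact ⟨lt_apply_of_monotone_div_of_isBot hηpos hMLRP hsum hne hbot,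
    apply_lt_of_monotone_div_of_isTop hηpos hMLRP hsum hne htop⟩
end
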